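/- Let {X^{(t)}} be generated by the ERALM method under block-Lipschitz smoothness with constant L, constant step size α ∈ (0,1] and regularization parameter λ > 0 in every block. Then the per-iteration stationarity bound holds: R(X^{(t)}) ≤ (f(X^{(t)}) − f(X^{(t+1)}))/α + N λ h̄ + 2 d̄² L N (2√N + 1) α, where R = Σᵢ R_i with R_i(X) = max_{T∈U(a_i,b_i)} ⟨∇_i f(X), X_i − T⟩, h̄ = −minᵢ h(a_i b_iᵀ), and d̄ = maxᵢ min{√(m_i)‖a_i‖_∞, √(n_i)‖b_i‖_∞}. -/

import Mathlib

/-- The transport polytope `U(a,b)`. -/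
def transportPolytope {m n : ℕ} (a : Fin m → ℝ) (b : Fin n → ℝ) :
    Set (Matrix (Fin m) (Fin n) ℝ) :=
  {T | (∀ j k, 0 ≤ T j k) ∧ (∀ j, ∑ k, T j k = a j) ∧ (∀ k, ∑ j, T j k = b k)}

/-- The Frobenius norm. -/
noncomputable def frob {m n : ℕ} (T : Matrix (Fin m) (Fin n) ℝ) : ℝ :=
  Real.sqrt (∑ j, ∑ k, (T j k) ^ 2)

/-- The Frobenius norm of a tuple of blocks. -/
noncomputable def frobTotal {N : ℕ} {m n : Fin N → ℕ}
    (X : ∀ i, Matrix (Fin (m i)) (Fin (n i)) ℝ) : ℝ :=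
  Real.sqrt (∑ i, ∑ j, ∑ k, (X i j k) ^ 2)

/-- The Frobenius inner product. -/
noncomputable def finner {m n : ℕ} (A B : Matrix (Fin m) (Fin n) ℝ) : ℝ :=
  ∑ j, ∑ k, A j k * B j k

/-- The negative entropy. -/
noncomputable def negEntropy {m n : ℕ} (T : Matrix (Fin m) (Fin n) ℝ) : ℝ :=
  ∑ j, ∑ k, T j k * (Real.log (T j k) - 1)

/-- The block stationarity residual
`R_i(X) = max_{T ∈ U(a_i,b_i)} ⟨∇_i f(X), X_i − T⟩`. -/
noncomputable def blockResidual {N : ℕ} {m n : Fin N → ℕ}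
    (a : ∀ i, Fin (m i) → ℝ) (b : ∀ i, Fin (n i) → ℝ)
    (gradf : (∀ i, Matrix (Fin (m i)) (Fin (n i)) ℝ) →
      ∀ i, Matrix (Fin (m i)) (Fin (n i)) ℝ)
    (X : ∀ i, Matrix (Fin (m i)) (Fin (n i)) ℝ) (i : Fin N) : ℝ :=
  ⨆ T : transportPolytope (a i) (b i), finner (gradf X i) (X i - (T : Matrix _ _ ℝ))


/-!
Each block update moves a fraction `α` towards the minimizer `X̃ᵢ` of the entropy-regularized
linearized subproblem, so the descent inequality at the intermediate point `Z` gives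
`α ⟪∇ᵢ f(Z), Xᵢ - X̃ᵢ⟫ ≤ f(Z) - f(Z') + 2Lα²d̄²`, where `Z'` is `Z` with block `i` updated.
Replacing `X̃ᵢ` by an arbitrary `T ∈ U(aᵢ, bᵢ)` costs at most `λh̄`, because on the polytope the
negative entropy lies between `h(aᵢbᵢᵀ)` (Gibbs' inequality) and `0`. Replacing `∇ᵢ f(Z)` by
`∇ᵢ f(X)` costs at most `4d̄²Lα√N`: `Z` differs from `X` in at most `N` blocks, each by `α` times
a difference of two points of a polytope of Frobenius radius `d̄`. Summing over the blocks, the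
function values telescope.
-/

open Finset
open scoped RealInnerProductSpace Matrix

section LinearizedStep

variable {E : Type*} [NormedAddCommGroup E] [InnerProductSpace ℝ E]

theorem inner_sub_le_of_descent {g x z x₁ : E} {f₀ f₁ α L D : ℝ} (hα : 0 < α) (hL : 0 ≤ L)
    (hx₁ : x₁ = (1 - α) • x + α • z)
    (hdesc : f₁ ≤ f₀ + ⟪g, x₁ - x⟫ + L / 2 * ‖x₁ - x‖ ^ 2) (hD : ‖z - x‖ ≤ D) :
    ⟪g, x - z⟫ ≤ (f₀ - f₁) / α + L / 2 * α * D ^ 2 := by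
  have hstep : x₁ - x = α • (z - x) := by rw [hx₁]; module
  rw [hstep, inner_smul_right, norm_smul, Real.norm_of_nonneg hα.le, mul_pow] at hdesc
  have hD2 : ‖z - x‖ ^ 2 ≤ D ^ 2 := pow_le_pow_left₀ (norm_nonneg _) hD 2
  have hflip : ⟪g, x - z⟫ = -⟪g, z - x⟫ := by rw [← inner_neg_right, neg_sub]
  rw [hflip, div_add' _ _ _ hα.ne', le_div_iff₀ hα]
  nlinarith [mul_le_mul_of_nonneg_left hD2 (by positivity : 0 ≤ L / 2 * α ^ 2)]

theorem inner_sub_le_of_linearized_step {g g' x z x₁ y : E} {f₀ f₁ α L D δ ε : ℝ}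
    (hα : 0 < α) (hL : 0 ≤ L) (hx₁ : x₁ = (1 - α) • x + α • z)
    (hdesc : f₁ ≤ f₀ + ⟪g, x₁ - x⟫ + L / 2 * ‖x₁ - x‖ ^ 2)
    (hz : ‖z - x‖ ≤ D) (hy : ‖x - y‖ ≤ D) (hreg : ⟪g, z - y⟫ ≤ δ) (hpert : ‖g' - g‖ ≤ ε) :
    ⟪g', x - y⟫ ≤ (f₀ - f₁) / α + δ + L / 2 * α * D ^ 2 + ε * D := by
  have hdec := inner_sub_le_of_descent hα hL hx₁ hdesc hz
  have hcs : ⟪g' - g, x - y⟫ ≤ ε * D := (real_inner_le_norm _ _).trans <|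
    mul_le_mul hpert hy (norm_nonneg _) ((norm_nonneg _).trans hpert)
  have hsplit : ⟪g', x - y⟫ = ⟪g, x - z⟫ + ⟪g, z - y⟫ + ⟪g' - g, x - y⟫ := by
    simp only [inner_sub_left, inner_sub_right]; ring
  linarith

end LinearizedStep

section Frobenius

variable {m n : ℕ}

def frobVec : Matrix (Fin m) (Fin n) ℝ →ₗ[ℝ] EuclideanSpace ℝ (Fin m × Fin n) where
  toFun T := WithLp.toLp 2 fun p => T p.1 p.2
  map_add' _ _ := rfl
  map_smul' _ _ := rfl

theorem frobVec_apply (T : Matrix (Fin m) (Fin n) ℝ) (p : Fin m × Fin n) :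
    frobVec T p = T p.1 p.2 :=
  rfl

theorem frob_eq_norm_frobVec (T : Matrix (Fin m) (Fin n) ℝ) : frob T = ‖frobVec T‖ := by
  simp [EuclideanSpace.norm_eq, frob, frobVec_apply, Fintype.sum_prod_type]

theorem finner_eq_inner_frobVec (A B : Matrix (Fin m) (Fin n) ℝ) :
    finner A B = ⟪frobVec A, frobVec B⟫ := by
  simp [finner, frobVec_apply, PiLp.inner_apply, Fintype.sum_prod_type, mul_comm]

theorem frob_nonneg (T : Matrix (Fin m) (Fin n) ℝ) : 0 ≤ frob T :=
  Real.sqrt_nonneg _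

theorem frob_zero : frob (0 : Matrix (Fin m) (Fin n) ℝ) = 0 := by
  simp [frob]

theorem frob_sub_le (A B : Matrix (Fin m) (Fin n) ℝ) : frob (A - B) ≤ frob A + frob B := by
  simpa only [frob_eq_norm_frobVec, map_sub] using norm_sub_le _ _

theorem frob_smul (c : ℝ) (A : Matrix (Fin m) (Fin n) ℝ) : frob (c • A) = |c| * frob A := by
  simp only [frob_eq_norm_frobVec, map_smul, norm_smul, Real.norm_eq_abs]

theorem frob_sub_smul_add_smul (α : ℝ) (A B : Matrix (Fin m) (Fin n) ℝ) :
    frob (A - ((1 - α) • A + α • B)) = |α| * frob (A - B) := by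
  rw [← frob_smul]
  congr 1
  module

theorem frob_transpose (T : Matrix (Fin m) (Fin n) ℝ) : frob Tᵀ = frob T := by
  simp only [frob, Matrix.transpose_apply]
  rw [sum_comm]

theorem finner_sub_right (A B C : Matrix (Fin m) (Fin n) ℝ) :
    finner A (B - C) = finner A B - finner A C := by
  simp only [finner_eq_inner_frobVec, map_sub, inner_sub_right]

theorem finner_sub_le_of_regularized_le {G Z T : Matrix (Fin m) (Fin n) ℝ} {lam η : ℝ}
    (hlam : 0 ≤ lam) (hopt : finner G Z + lam * negEntropy Z ≤ finner G T + lam * negEntropy T)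
    (hgap : negEntropy T - negEntropy Z ≤ η) : finner G (Z - T) ≤ lam * η := by
  rw [finner_sub_right]
  nlinarith

theorem finner_sub_le_of_linearized_step {G G' X Z X₁ T : Matrix (Fin m) (Fin n) ℝ}
    {f₀ f₁ α L D δ ε : ℝ} (hα : 0 < α) (hL : 0 ≤ L) (hX₁ : X₁ = (1 - α) • X + α • Z)
    (hdesc : f₁ ≤ f₀ + finner G (X₁ - X) + L / 2 * frob (X₁ - X) ^ 2)
    (hZ : frob (Z - X) ≤ D) (hT : frob (X - T) ≤ D) (hreg : finner G (Z - T) ≤ δ)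
    (hpert : frob (G' - G) ≤ ε) :
    finner G' (X - T) ≤ (f₀ - f₁) / α + δ + L / 2 * α * D ^ 2 + ε * D := by
  simp only [finner_eq_inner_frobVec, frob_eq_norm_frobVec, map_sub] at *
  exact inner_sub_le_of_linearized_step hα hL (by rw [hX₁, map_add, map_smul, map_smul])
    hdesc hZ hT hreg hpert

end Frobenius

theorem sqrt_sum_le_sqrt_card_mul {ι : Type*} [Fintype ι] {g : ι → ℝ} {c : ℝ} (hc : 0 ≤ c)
    (hg : ∀ i, g i ≤ c ^ 2) : Real.sqrt (∑ i, g i) ≤ Real.sqrt (Fintype.card ι) * c := by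
  calc Real.sqrt (∑ i, g i) ≤ Real.sqrt (∑ _i : ι, c ^ 2) :=
        Real.sqrt_le_sqrt (sum_le_sum fun i _ => hg i)
    _ = Real.sqrt (Fintype.card ι) * c := by
      rw [sum_const, card_univ, nsmul_eq_mul, Real.sqrt_mul (Nat.cast_nonneg _), Real.sqrt_sq hc]

theorem frobTotal_le_sqrt_mul {N : ℕ} {m n : Fin N → ℕ}
    {X : ∀ i, Matrix (Fin (m i)) (Fin (n i)) ℝ} {c : ℝ} (hc : 0 ≤ c)
    (hX : ∀ i, frob (X i) ≤ c) : frobTotal X ≤ Real.sqrt N * c := by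
  have hsq : ∀ i, ∑ j, ∑ k, X i j k ^ 2 ≤ c ^ 2 := fun i => by
    rw [← Real.sq_sqrt (by positivity : 0 ≤ ∑ j, ∑ k, X i j k ^ 2)]
    exact pow_le_pow_left₀ (frob_nonneg _) (hX i) 2
  simpa only [frobTotal, Fintype.card_fin] using sqrt_sum_le_sqrt_card_mul hc hsq

theorem frobTotal_sub_le_of_interp {N : ℕ} {m n : Fin N → ℕ}
    {X Y Z : ∀ i, Matrix (Fin (m i)) (Fin (n i)) ℝ} {k : ℕ} {c : ℝ} (hc : 0 ≤ c)
    (hXY : ∀ j, frob (X j - Y j) ≤ c) (hZ : ∀ j, Z j = if (j : ℕ) < k then Y j else X j) :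
    frobTotal (fun j => X j - Z j) ≤ Real.sqrt N * c := by
  refine frobTotal_le_sqrt_mul hc fun j => ?_
  rw [hZ]
  split_ifs
  · exact hXY j
  · rwa [sub_self, frob_zero]

section TransportPolytope

variable {m n : ℕ} {a : Fin m → ℝ} {b : Fin n → ℝ} {T : Matrix (Fin m) (Fin n) ℝ}

theorem convex_transportPolytope : Convex ℝ (transportPolytope a b) := by
  rintro S ⟨hS0, hSr, hSc⟩ T ⟨hT0, hTr, hTc⟩ μ ν hμ hν hμν
  refine ⟨fun j k => ?_, fun j => ?_, fun k => ?_⟩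
  · simp only [Matrix.add_apply, Matrix.smul_apply, smul_eq_mul]
    have := hS0 j k; have := hT0 j k
    positivity
  · simp only [Matrix.add_apply, Matrix.smul_apply, smul_eq_mul, sum_add_distrib, ← mul_sum,
      hSr j, hTr j]
    rw [← add_mul, hμν, one_mul]
  · simp only [Matrix.add_apply, Matrix.smul_apply, smul_eq_mul, sum_add_distrib, ← mul_sum,
      hSc k, hTc k]
    rw [← add_mul, hμν, one_mul]

theorem outer_mem_transportPolytope (ha : ∀ j, 0 ≤ a j) (hb : ∀ k, 0 ≤ b k)
    (hsa : ∑ j, a j = 1) (hsb : ∑ k, b k = 1) :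
    (fun j k => a j * b k : Matrix (Fin m) (Fin n) ℝ) ∈ transportPolytope a b :=
  ⟨fun j k => mul_nonneg (ha j) (hb k), fun j => by simp [← mul_sum, hsb],
    fun k => by simp [← sum_mul, hsa]⟩

theorem transpose_mem_transportPolytope (hT : T ∈ transportPolytope a b) :
    Tᵀ ∈ transportPolytope b a :=
  ⟨fun k j => hT.1 j k, hT.2.2, hT.2.1⟩

theorem frob_le_sqrt_mul_of_mem_transportPolytope {s : ℝ} (hT : T ∈ transportPolytope a b)
    (hs : ∀ j, a j ≤ s) (hs0 : 0 ≤ s) : frob T ≤ Real.sqrt m * s := by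
  obtain ⟨hT0, hTr, -⟩ := hT
  have hrow : ∀ j, ∑ k, T j k ^ 2 ≤ s ^ 2 := fun j =>
    calc ∑ k, T j k ^ 2 ≤ (∑ k, T j k) ^ 2 := sum_sq_le_sq_sum_of_nonneg fun k _ => hT0 j k
      _ = a j ^ 2 := by rw [hTr j]
      _ ≤ s ^ 2 := pow_le_pow_left₀ (hTr j ▸ sum_nonneg fun k _ => hT0 j k) (hs j) 2
  simpa only [frob, Fintype.card_fin] using sqrt_sum_le_sqrt_card_mul hs0 hrow

theorem frob_le_min_of_mem_transportPolytope (hT : T ∈ transportPolytope a b) :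
    frob T ≤ min (Real.sqrt m * ⨆ j, |a j|) (Real.sqrt n * ⨆ k, |b k|) := by
  have le_iSup_abs {ι : Type} [Finite ι] (c : ι → ℝ) (i : ι) : c i ≤ ⨆ i, |c i| :=
    (le_abs_self _).trans (le_ciSup (f := fun i => |c i|) (Set.finite_range _).bddAbove i)
  refine le_min (frob_le_sqrt_mul_of_mem_transportPolytope hT (le_iSup_abs a) ?_) ?_
  · exact Real.iSup_nonneg fun j => abs_nonneg _
  · rw [← frob_transpose]
    exact frob_le_sqrt_mul_of_mem_transportPolytope (transpose_mem_transportPolytope hT)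
      (le_iSup_abs b) (Real.iSup_nonneg fun k => abs_nonneg _)

theorem negEntropy_nonpos_of_mem_transportPolytope (hsa : ∑ j, a j = 1)
    (hT : T ∈ transportPolytope a b) : negEntropy T ≤ 0 := by
  obtain ⟨hT0, hTr, -⟩ := hT
  have ha0 : ∀ j, 0 ≤ a j := fun j => hTr j ▸ sum_nonneg fun k _ => hT0 j k
  refine sum_nonpos fun j _ => sum_nonpos fun k _ => mul_nonpos_of_nonneg_of_nonpos (hT0 j k) ?_
  have hTa : T j k ≤ a j := hTr j ▸ single_le_sum (fun l _ => hT0 j l) (mem_univ k)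
  have haj : a j ≤ 1 := hsa ▸ single_le_sum (fun l _ => ha0 l) (mem_univ j)
  linarith [Real.log_nonpos (hT0 j k) (hTa.trans haj)]

theorem sum_sum_eq_of_mem_transportPolytope (hT : T ∈ transportPolytope a b) :
    ∑ j, ∑ k, T j k = ∑ j, a j :=
  sum_congr rfl fun j _ => hT.2.1 j

theorem sum_mul_log_outer_of_mem_transportPolytope (ha : ∀ j, 0 < a j) (hb : ∀ k, 0 < b k)
    (hT : T ∈ transportPolytope a b) :
    ∑ j, ∑ k, T j k * Real.log (a j * b k) =
      ∑ j, a j * Real.log (a j) + ∑ k, b k * Real.log (b k) := by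
  simp only [Real.log_mul (ha _).ne' (hb _).ne', mul_add, sum_add_distrib, ← sum_mul, hT.2.1]
  rw [sum_comm]
  simp only [← sum_mul, hT.2.2]

theorem negEntropy_eq (T : Matrix (Fin m) (Fin n) ℝ) :
    negEntropy T = ∑ j, ∑ k, T j k * Real.log (T j k) - ∑ j, ∑ k, T j k := by
  simp only [negEntropy, mul_sub, mul_one, sum_sub_distrib]

theorem sub_le_mul_log_sub_mul_log {p q : ℝ} (hp : 0 ≤ p) (hq : 0 < q) :
    p - q ≤ p * Real.log p - p * Real.log q := by
  rcases hp.eq_or_lt with rfl | hp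
  · simp [hq.le]
  · have := InformationTheory.klFun_nonneg (div_pos hp hq).le
    rw [InformationTheory.klFun, Real.log_div hp.ne' hq.ne'] at this
    have hq' : q * (p / q * (Real.log p - Real.log q) + 1 - p / q) =
        p * Real.log p - p * Real.log q + q - p := by field_simp
    nlinarith [mul_nonneg hq.le this]

theorem negEntropy_outer_le (ha : ∀ j, 0 < a j) (hb : ∀ k, 0 < b k)
    (hsa : ∑ j, a j = 1) (hsb : ∑ k, b k = 1) (hT : T ∈ transportPolytope a b) :
    negEntropy (fun j k => a j * b k : Matrix (Fin m) (Fin n) ℝ) ≤ negEntropy T := by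
  have hP := outer_mem_transportPolytope (fun j => (ha j).le) (fun k => (hb k).le) hsa hsb
  have hgibbs : ∑ j, ∑ k, (T j k - a j * b k) ≤
      ∑ j, ∑ k, (T j k * Real.log (T j k) - T j k * Real.log (a j * b k)) :=
    sum_le_sum fun j _ => sum_le_sum fun k _ =>
      sub_le_mul_log_sub_mul_log (hT.1 j k) (mul_pos (ha j) (hb k))
  have hPP := sum_mul_log_outer_of_mem_transportPolytope ha hb hP
  have hPT := sum_mul_log_outer_of_mem_transportPolytope ha hb hT
  have hPm := sum_sum_eq_of_mem_transportPolytope hP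
  have hTm := sum_sum_eq_of_mem_transportPolytope hT
  -- `∑ T log (a bᵀ)` depends on `T` only through its marginals
  simp only [sum_sub_distrib] at hgibbs
  linarith [negEntropy_eq T, negEntropy_eq (fun j k => a j * b k : Matrix (Fin m) (Fin n) ℝ)]

end TransportPolytope

theorem mem_of_convex_updates {ι : Type*} {E : ι → Type*} [∀ i, AddCommGroup (E i)]
    [∀ i, Module ℝ (E i)] {U : ∀ i, Set (E i)} (hU : ∀ i, Convex ℝ (U i)) {α : ℝ}
    (hα0 : 0 ≤ α) (hα1 : α ≤ 1) {x z : ℕ → ∀ i, E i} (hx0 : ∀ i, x 0 i ∈ U i)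
    (hz : ∀ s i, z s i ∈ U i) (hx : ∀ s i, x (s + 1) i = (1 - α) • x s i + α • z s i) :
    ∀ s i, x s i ∈ U i := by
  intro s
  induction s with
  | zero => exact hx0
  | succ s ih => exact fun i => hx s i ▸ hU i (ih i) (hz s i) (by linarith) hα0 (by ring)

section Blocks

variable {N : ℕ} {m n : Fin N → ℕ} {a : ∀ i, Fin (m i) → ℝ} {b : ∀ i, Fin (n i) → ℝ}

theorem frob_sub_le_two_mul_iSup_min {i : Fin N} {S T : Matrix (Fin (m i)) (Fin (n i)) ℝ}
    (hS : S ∈ transportPolytope (a i) (b i)) (hT : T ∈ transportPolytope (a i) (b i)) :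
    frob (S - T) ≤
      2 * ⨆ i, min (Real.sqrt (m i) * (⨆ j, |a i j|)) (Real.sqrt (n i) * (⨆ k, |b i k|)) := by
  have hle : ∀ U ∈ transportPolytope (a i) (b i),
      frob U ≤ ⨆ i, min (Real.sqrt (m i) * (⨆ j, |a i j|)) (Real.sqrt (n i) * (⨆ k, |b i k|)) :=
    fun U hU => (frob_le_min_of_mem_transportPolytope hU).trans <|
      le_ciSup (f := fun i => min (Real.sqrt (m i) * (⨆ j, |a i j|))
        (Real.sqrt (n i) * (⨆ k, |b i k|))) (Set.finite_range _).bddAbove i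
  linarith [frob_sub_le S T, hle S hS, hle T hT]

theorem negEntropy_sub_le_neg_iInf (ha : ∀ i j, 0 < a i j) (hb : ∀ i k, 0 < b i k)
    (hsa : ∀ i, ∑ j, a i j = 1) (hsb : ∀ i, ∑ k, b i k = 1) {i : Fin N}
    {S T : Matrix (Fin (m i)) (Fin (n i)) ℝ} (hS : S ∈ transportPolytope (a i) (b i))
    (hT : T ∈ transportPolytope (a i) (b i)) :
    negEntropy T - negEntropy S ≤ -⨅ i, negEntropy (fun j k => a i j * b i k) := by
  have hinf : ⨅ i, negEntropy (fun j k => a i j * b i k) ≤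
      negEntropy (fun j k => a i j * b i k) :=
    ciInf_le (f := fun i => negEntropy (fun j k => a i j * b i k))
      (Set.finite_range _).bddBelow i
  linarith [negEntropy_nonpos_of_mem_transportPolytope (hsa i) hT,
    negEntropy_outer_le (ha i) (hb i) (hsa i) (hsb i) hS]

theorem blockResidual_le (ha : ∀ i j, 0 ≤ a i j) (hb : ∀ i k, 0 ≤ b i k)
    (hsa : ∀ i, ∑ j, a i j = 1) (hsb : ∀ i, ∑ k, b i k = 1)
    {gradf : (∀ i, Matrix (Fin (m i)) (Fin (n i)) ℝ) → ∀ i, Matrix (Fin (m i)) (Fin (n i)) ℝ}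
    {X : ∀ i, Matrix (Fin (m i)) (Fin (n i)) ℝ} {i : Fin N} {c : ℝ}
    (h : ∀ T ∈ transportPolytope (a i) (b i), finner (gradf X i) (X i - T) ≤ c) :
    blockResidual a b gradf X i ≤ c :=
  have : Nonempty (transportPolytope (a i) (b i)) :=
    ⟨⟨_, outer_mem_transportPolytope (ha i) (hb i) (hsa i) (hsb i)⟩⟩
  ciSup_le fun T => h T T.2

end Blocks

theorem sum_sub_update_eq_sub {N : ℕ} {β : Fin N → Type*} {M : Type*} [AddCommGroup M]
    (g : (∀ i, β i) → M) {x y : ∀ i, β i} {z : Fin N → ∀ i, β i}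
    (hz : ∀ i j, z i j = if (j : ℕ) < i then y j else x j) :
    ∑ i, (g (z i) - g (Function.update (z i) i (y i))) = g x - g y := by
  set F : ℕ → M := fun k => g fun j => if (j : ℕ) < k then y j else x j
  have hzF : ∀ i : Fin N, g (z i) = F i := fun i => congrArg g (funext (hz i))
  have hupdF : ∀ i : Fin N, g (Function.update (z i) i (y i)) = F ((i : ℕ) + 1) := by
    refine fun i => congrArg g (funext fun j => ?_)
    rcases eq_or_ne j i with rfl | hji
    · simp
    · have : (j : ℕ) ≠ i := Fin.val_ne_of_ne hji
      rw [Function.update_of_ne hji, hz]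
      split_ifs <;> first | rfl | omega
  simp only [hzF, hupdF]
  rw [Fin.sum_univ_eq_sum_range (fun k => F k - F (k + 1)), sum_range_sub']
  simp [F]

theorem eralm_per_iteration_bound_general {N : ℕ} {m n : Fin N → ℕ}
    (a : ∀ i, Fin (m i) → ℝ) (b : ∀ i, Fin (n i) → ℝ)
    (ha : ∀ i j, 0 < a i j) (hb : ∀ i k, 0 < b i k)
    (hsa : ∀ i, ∑ j, a i j = 1) (hsb : ∀ i, ∑ k, b i k = 1)
    (f : (∀ i, Matrix (Fin (m i)) (Fin (n i)) ℝ) → ℝ)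
    (gradf : (∀ i, Matrix (Fin (m i)) (Fin (n i)) ℝ) →
      ∀ i, Matrix (Fin (m i)) (Fin (n i)) ℝ)
    (L : ℝ) (hL : 0 < L)
    -- block-Lipschitz smoothness: Lipschitz gradients and the descent inequality
    (hlip : ∀ X X' : ∀ i, Matrix (Fin (m i)) (Fin (n i)) ℝ,
      (∀ i, X i ∈ transportPolytope (a i) (b i)) →
      (∀ i, X' i ∈ transportPolytope (a i) (b i)) →
      ∀ i, frob (gradf X i - gradf X' i) ≤ L * frobTotal (fun i => X i - X' i))
    (hdesc : ∀ X : ∀ i, Matrix (Fin (m i)) (Fin (n i)) ℝ,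
      (∀ i, X i ∈ transportPolytope (a i) (b i)) →
      ∀ i, ∀ Y ∈ transportPolytope (a i) (b i),
        f (Function.update X i Y) ≤
          f X + finner (gradf X i) (Y - X i) + L / 2 * (frob (Y - X i)) ^ 2)
    (α lam : ℝ) (hα : α ∈ Set.Ioc (0 : ℝ) 1) (hlam : 0 < lam)
    (X Xtil : ℕ → ∀ i, Matrix (Fin (m i)) (Fin (n i)) ℝ)
    (hfeas0 : ∀ i, X 0 i ∈ transportPolytope (a i) (b i))
    -- intermediate points `(X_{<i}^{(t+1)}, X_{≥i}^{(t)})`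
    (Z : ℕ → Fin N → ∀ i, Matrix (Fin (m i)) (Fin (n i)) ℝ)
    (hZ : ∀ t i j, Z t i j = if (j : ℕ) < (i : ℕ) then X (t + 1) j else X t j)
    -- `X̃_i^{(t+1)}` exactly solves the entropy-regularized subproblem
    (hsub : ∀ t i, Xtil t i ∈ transportPolytope (a i) (b i) ∧
      ∀ T ∈ transportPolytope (a i) (b i),
        finner (gradf (Z t i) i) (Xtil t i) + lam * negEntropy (Xtil t i) ≤
          finner (gradf (Z t i) i) T + lam * negEntropy T)
    -- convex-combination update
    (hupd : ∀ t i, X (t + 1) i = (1 - α) • X t i + α • Xtil t i)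
    (hbar dbar : ℝ)
    (hhbar : hbar = -(⨅ i, negEntropy (fun j k => a i j * b i k)))
    (hdbar : dbar = ⨆ i,
      min (Real.sqrt (m i) * (⨆ j, |a i j|)) (Real.sqrt (n i) * (⨆ k, |b i k|))) :
    ∀ t, ∑ i, blockResidual a b gradf (X t) i ≤
      (f (X t) - f (X (t + 1))) / α + N * lam * hbar +
        2 * dbar ^ 2 * L * N * (2 * Real.sqrt N + 1) * α := by
  intro t
  obtain ⟨hα0, hα1⟩ := hα
  have hX : ∀ s i, X s i ∈ transportPolytope (a i) (b i) :=
    mem_of_convex_updates (fun _ => convex_transportPolytope) hα0.le hα1 hfeas0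
      (fun s i => (hsub s i).1) hupd
  have hZX : ∀ i j, Z t i j ∈ transportPolytope (a j) (b j) := fun i j => by
    rw [hZ]; split_ifs <;> apply hX
  have hdiam : ∀ i, ∀ S ∈ transportPolytope (a i) (b i), ∀ T ∈ transportPolytope (a i) (b i),
      frob (S - T) ≤ 2 * dbar := fun _ _ hS _ hT => hdbar ▸ frob_sub_le_two_mul_iSup_min hS hT
  have hstep : ∀ j, frob (X t j - X (t + 1) j) ≤ 2 * dbar * α := fun j => by
    rw [hupd, frob_sub_smul_add_smul, abs_of_pos hα0, mul_comm]
    exact mul_le_mul_of_nonneg_right (hdiam j _ (hX t j) _ (hsub t j).1) hα0.le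
  have hpert : ∀ i, frob (gradf (X t) i - gradf (Z t i) i) ≤ L * (Real.sqrt N * (2 * dbar * α)) :=
    fun i => (hlip _ _ (hX t) (hZX i) i).trans <| mul_le_mul_of_nonneg_left
      (frobTotal_sub_le_of_interp ((frob_nonneg _).trans (hstep i)) hstep (hZ t i)) hL.le
  have hblock : ∀ i, blockResidual a b gradf (X t) i ≤
      (f (Z t i) - f (Function.update (Z t i) i (X (t + 1) i))) / α + lam * hbar +
        L / 2 * α * (2 * dbar) ^ 2 + L * (Real.sqrt N * (2 * dbar * α)) * (2 * dbar) := fun i =>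
    have hZi : Z t i i = X t i := by simp [hZ]
    blockResidual_le (fun i j => (ha i j).le) (fun i k => (hb i k).le) hsa hsb fun T hT =>
      finner_sub_le_of_linearized_step hα0 hL.le (hupd t i)
        (hZi ▸ hdesc _ (hZX i) i _ (hX (t + 1) i)) (hdiam i _ (hsub t i).1 _ (hX t i))
        (hdiam i _ (hX t i) _ hT)
        (finner_sub_le_of_regularized_le hlam.le ((hsub t i).2 T hT)
          (hhbar ▸ negEntropy_sub_le_neg_iInf ha hb hsa hsb (hsub t i).1 hT))
        (hpert i)
  refine (sum_le_sum fun i _ => hblock i).trans_eq ?_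
  simp only [sum_add_distrib, ← sum_div, sum_sub_update_eq_sub f (hZ t), sum_const,
    card_univ, Fintype.card_fin, nsmul_eq_mul]
  ring

/-- Per-iteration stationarity bound for the ERALM method: along iterates generated by the
entropy-regularized alternating linearized minimization with constant step size
`α ∈ (0,1]`, regularization parameter `λ > 0` and block-Lipschitz gradients with constant
`L`, one has `R(X^{(t)}) ≤ (f(X^{(t)}) − f(X^{(t+1)}))/α + Nλh̄ + 2d̄²LN(2√N+1)α`. -/
theorem eralm_per_iteration_bound {N : ℕ} (hN : 0 < N) {m n : Fin N → ℕ}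
    (a : ∀ i, Fin (m i) → ℝ) (b : ∀ i, Fin (n i) → ℝ)
    (ha : ∀ i j, 0 < a i j) (hb : ∀ i k, 0 < b i k)
    (hsa : ∀ i, ∑ j, a i j = 1) (hsb : ∀ i, ∑ k, b i k = 1)
    (f : (∀ i, Matrix (Fin (m i)) (Fin (n i)) ℝ) → ℝ)
    (gradf : (∀ i, Matrix (Fin (m i)) (Fin (n i)) ℝ) →
      ∀ i, Matrix (Fin (m i)) (Fin (n i)) ℝ)
    (L : ℝ) (hL : 0 < L)
    -- block-Lipschitz smoothness: Lipschitz gradients and the descent inequality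
    (hlip : ∀ X X' : ∀ i, Matrix (Fin (m i)) (Fin (n i)) ℝ,
      (∀ i, X i ∈ transportPolytope (a i) (b i)) →
      (∀ i, X' i ∈ transportPolytope (a i) (b i)) →
      ∀ i, frob (gradf X i - gradf X' i) ≤ L * frobTotal (fun i => X i - X' i))
    (hdesc : ∀ X : ∀ i, Matrix (Fin (m i)) (Fin (n i)) ℝ,
      (∀ i, X i ∈ transportPolytope (a i) (b i)) →
      ∀ i, ∀ Y ∈ transportPolytope (a i) (b i),
        f (Function.update X i Y) ≤
          f X + finner (gradf X i) (Y - X i) + L / 2 * (frob (Y - X i)) ^ 2)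
    (α lam : ℝ) (hα : α ∈ Set.Ioc (0 : ℝ) 1) (hlam : 0 < lam)
    (X Xtil : ℕ → ∀ i, Matrix (Fin (m i)) (Fin (n i)) ℝ)
    (hfeas0 : ∀ i, X 0 i ∈ transportPolytope (a i) (b i))
    -- intermediate points `(X_{<i}^{(t+1)}, X_{≥i}^{(t)})`
    (Z : ℕ → Fin N → ∀ i, Matrix (Fin (m i)) (Fin (n i)) ℝ)
    (hZ : ∀ t i j, Z t i j = if (j : ℕ) < (i : ℕ) then X (t + 1) j else X t j)
    -- `X̃_i^{(t+1)}` exactly solves the entropy-regularized subproblem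
    (hsub : ∀ t i, Xtil t i ∈ transportPolytope (a i) (b i) ∧
      ∀ T ∈ transportPolytope (a i) (b i),
        finner (gradf (Z t i) i) (Xtil t i) + lam * negEntropy (Xtil t i) ≤
          finner (gradf (Z t i) i) T + lam * negEntropy T)
    -- convex-combination update
    (hupd : ∀ t i, X (t + 1) i = (1 - α) • X t i + α • Xtil t i)
    (hbar dbar : ℝ)
    (hhbar : hbar = -(⨅ i, negEntropy (fun j k => a i j * b i k)))
    (hdbar : dbar = ⨆ i,
      min (Real.sqrt (m i) * (⨆ j, |a i j|)) (Real.sqrt (n i) * (⨆ k, |b i k|))) :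
    ∀ t, ∑ i, blockResidual a b gradf (X t) i ≤
      (f (X t) - f (X (t + 1))) / α + N * lam * hbar +
        2 * dbar ^ 2 * L * N * (2 * Real.sqrt N + 1) * α :=
  eralm_per_iteration_bound_general a b ha hb hsa hsb f gradf L hL hlip hdesc α lam hα hlam X Xtil
    hfeas0 Z hZ hsub hupd hbar dbar hhbar hdbar
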